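/- arXiv:1907.04118 — 2 statements merged into one kernel-verified Lean document; each statement's English description precedes it below -/
import Mathlib

section
/- Let α ∈ ℝ and let f : ℝ → ℝ be a C⁴ function satisfying f''''(z) = f''(z) for every z ∈ ℝ, with f(0) = 0 and f'(0) = 0. If there exists M ≥ 0 such that |f(z) − α·z| ≤ M for all z ≥ 0, then f(z) = α·(exp(−z) + z − 1) for all z ∈ ℝ, and consequently f(z) − α·z converges to −α as z → ∞. -/
/-!
Every solution of f'''' = f'' has the form a e^z + b e^{-z} + c + d z: the function f'' solves
u'' = u, so u' ± u are multiples of e^{±z}, and f - f'' has vanishing second derivative.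
If f(z) - α z stays bounded as z → ∞, multiplying it by e^{-z} forces a = 0 and dividing it by z
forces d = α; the conditions f(0) = f'(0) = 0 then give b = α and c = -α.
-/

open Real Filter Topology

theorem eq_mul_exp_of_deriv_eq_mul {g : ℝ → ℝ} {k : ℝ} (hg : Differentiable ℝ g)
    (h : ∀ z, deriv g z = k * g z) (z : ℝ) : g z = g 0 * exp (k * z) := by
  have hφ : ∀ x, HasDerivAt (fun x => exp (-(k * x)) * g x) 0 x := fun x => by
    refine ((((hasDerivAt_id x).const_mul k).neg).exp).mul (hg x).hasDerivAt |>.congr_deriv ?_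
    rw [h x]
    ring
  have hconst := is_const_of_deriv_eq_zero (fun x => (hφ x).differentiableAt)
    (fun x => (hφ x).deriv) z 0
  simp only [mul_zero, neg_zero, exp_zero, one_mul] at hconst
  rw [← hconst, mul_right_comm, ← exp_add, neg_add_cancel, exp_zero, one_mul]

theorem exists_eq_exp_add_exp_of_deriv_deriv_eq_self {u : ℝ → ℝ} (hu : Differentiable ℝ u)
    (hu' : Differentiable ℝ (deriv u)) (h : ∀ z, deriv (deriv u) z = u z) :
    ∃ a b : ℝ, ∀ z, u z = a * exp z + b * exp (-z) := by
  have hplus := eq_mul_exp_of_deriv_eq_mul (g := deriv u + u) (k := 1) (hu'.add hu)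
    fun z => by rw [deriv_add (hu' z) (hu z)]; simp [h z, add_comm]
  have hminus := eq_mul_exp_of_deriv_eq_mul (g := deriv u - u) (k := -1) (hu'.sub hu)
    fun z => by rw [deriv_sub (hu' z) (hu z)]; simp [h z]
  refine ⟨(deriv u 0 + u 0) / 2, -(deriv u 0 - u 0) / 2, fun z => ?_⟩
  have hp := hplus z
  have hm := hminus z
  simp only [Pi.add_apply, Pi.sub_apply, one_mul, neg_one_mul] at hp hm
  linarith

theorem exists_eq_add_mul_of_deriv_deriv_eq_zero {w : ℝ → ℝ} (hw : Differentiable ℝ w)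
    (hw' : Differentiable ℝ (deriv w)) (h : ∀ z, deriv (deriv w) z = 0) :
    ∃ c d : ℝ, ∀ z, w z = c + d * z := by
  have hslope : ∀ z, deriv w z = deriv w 0 := fun z => is_const_of_deriv_eq_zero hw' h z 0
  have hφ : ∀ x, HasDerivAt (fun x => w x - deriv w 0 * x) 0 x := fun x => by
    refine (hw x).hasDerivAt.sub ((hasDerivAt_id x).const_mul (deriv w 0)) |>.congr_deriv ?_
    rw [hslope x, mul_one, sub_self]
  refine ⟨w 0, deriv w 0, fun z => ?_⟩
  have := is_const_of_deriv_eq_zero (fun x => (hφ x).differentiableAt) (fun x => (hφ x).deriv) z 0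
  simp only [mul_zero, sub_zero] at this
  linarith

theorem exists_eq_of_iteratedDeriv_four_eq_iteratedDeriv_two {f : ℝ → ℝ} (hf : ContDiff ℝ 4 f)
    (hode : ∀ z, iteratedDeriv 4 f z = iteratedDeriv 2 f z) :
    ∃ a b c d : ℝ, ∀ z, f z = a * exp z + b * exp (-z) + c + d * z := by
  set u := iteratedDeriv 2 f
  have hu2 : deriv (deriv f) = u := by simp [u, iteratedDeriv_succ]
  have hode' : ∀ z, deriv (deriv u) z = u z := by simpa [u, iteratedDeriv_succ] using hode
  have hdf : Differentiable ℝ f := hf.differentiable (by norm_num)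
  have hdf' : Differentiable ℝ (deriv f) := by
    simpa using hf.differentiable_iteratedDeriv 1 (by norm_num)
  have hdu : Differentiable ℝ u := hf.differentiable_iteratedDeriv 2 (by norm_num)
  have hdu' : Differentiable ℝ (deriv u) := by
    simpa [u, iteratedDeriv_succ] using hf.differentiable_iteratedDeriv 3 (by norm_num)
  obtain ⟨a, b, hab⟩ := exists_eq_exp_add_exp_of_deriv_deriv_eq_self hdu hdu' hode'
  have hw' : deriv (f - u) = deriv f - deriv u := funext fun z => deriv_sub (hdf z) (hdu z)
  obtain ⟨c, d, hcd⟩ := exists_eq_add_mul_of_deriv_deriv_eq_zero (hdf.sub hdu)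
    (by rw [hw']; exact hdf'.sub hdu') fun z => by
      rw [hw', deriv_sub (hdf' z) (hdu' z), hu2, hode']; simp
  refine ⟨a, b, c, d, fun z => ?_⟩
  have := hcd z
  simp only [Pi.sub_apply] at this
  rw [← hab z]
  linarith

theorem hasDerivAt_mul_exp_add_mul_exp_neg_add_add_mul (a b c d x : ℝ) :
    HasDerivAt (fun z => a * exp z + b * exp (-z) + c + d * z) (a * exp x - b * exp (-x) + d) x :=
  ((((hasDerivAt_exp x).const_mul a).add ((hasDerivAt_neg x).exp.const_mul b)).add_const c).add
    ((hasDerivAt_id x).const_mul d) |>.congr_deriv (by simp only [mul_one, mul_neg]; ring)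

theorem eq_zero_of_isBoundedUnder_of_tendsto_mul {ι : Type*} {l : Filter ι} [l.NeBot]
    {g k : ι → ℝ} {L : ℝ} (hg : IsBoundedUnder (· ≤ ·) l (norm ∘ g))
    (hk : Tendsto k l (𝓝 0)) (hgk : Tendsto (fun x => g x * k x) l (𝓝 L)) : L = 0 :=
  tendsto_nhds_unique hgk (isBoundedUnder_le_mul_tendsto_zero hg hk)

theorem eq_zero_and_eq_zero_of_isBoundedUnder {a b c d : ℝ}
    (h : IsBoundedUnder (· ≤ ·) atTop (norm ∘ fun z => a * exp z + b * exp (-z) + c + d * z)) :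
    a = 0 ∧ d = 0 := by
  have ha : a = 0 := by
    refine eq_zero_of_isBoundedUnder_of_tendsto_mul h tendsto_exp_neg_atTop_nhds_zero ?_
    have hz := tendsto_pow_mul_exp_neg_atTop_nhds_zero 1
    have he := tendsto_exp_neg_atTop_nhds_zero
    have := (((tendsto_const_nhds (x := a)).add ((he.mul he).const_mul b)).add
      (he.const_mul c)).add (hz.const_mul d)
    simp only [mul_zero, add_zero] at this
    refine this.congr fun z => ?_
    have : exp z * exp (-z) = 1 := by rw [← exp_add, add_neg_cancel, exp_zero]
    linear_combination (-a) * this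
  refine ⟨ha, eq_zero_of_isBoundedUnder_of_tendsto_mul h tendsto_inv_atTop_zero ?_⟩
  have hi := tendsto_inv_atTop_zero (𝕜 := ℝ)
  have := ((((tendsto_exp_neg_atTop_nhds_zero.mul hi).const_mul b)).add (hi.const_mul c)).add
    (tendsto_const_nhds (x := d))
  simp only [mul_zero, zero_add] at this
  refine this.congr' ?_
  filter_upwards [eventually_ne_atTop 0] with z hz
  simp only [ha, zero_mul, zero_add]
  field_simp

/-- First-order matching at x = 0: a C⁴ solution of f'''' = f'' with clamped
    conditions such that f(z) - α·z is bounded on [0, ∞) equals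
    α·(e^{-z} + z - 1), and f(z) - α·z → -α as z → ∞. -/
theorem stmt_5 (α : ℝ) (f : ℝ → ℝ) (hf : ContDiff ℝ 4 f)
    (hode : ∀ z : ℝ, iteratedDeriv 4 f z = iteratedDeriv 2 f z)
    (h0 : f 0 = 0) (h1 : deriv f 0 = 0)
    (hbdd : ∃ M : ℝ, 0 ≤ M ∧ ∀ z : ℝ, 0 ≤ z → |f z - α * z| ≤ M) :
    (∀ z : ℝ, f z = α * (Real.exp (-z) + z - 1)) ∧
      Filter.Tendsto (fun z => f z - α * z) Filter.atTop (nhds (-α)) := by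
  obtain ⟨M, -, hM⟩ := hbdd
  obtain ⟨a, b, c, d, hf_eq⟩ := exists_eq_of_iteratedDeriv_four_eq_iteratedDeriv_two hf hode
  have hf_deriv : HasDerivAt f (a - b + d) 0 := by
    simpa [← funext hf_eq] using hasDerivAt_mul_exp_add_mul_exp_neg_add_add_mul a b c d 0
  obtain ⟨rfl, hd⟩ := eq_zero_and_eq_zero_of_isBoundedUnder (a := a) (b := b) (c := c) (d := d - α)
    (isBoundedUnder_of_eventually_le (a := M) <| by
      filter_upwards [eventually_ge_atTop 0] with z hz
      simpa [hf_eq z, sub_mul, add_sub_assoc] using hM z hz)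
  have hb : b = α := by
    have := h1 ▸ hf_deriv.deriv
    linarith
  have hc : c = -α := by
    simp only [hf_eq, hb, zero_mul, exp_neg, exp_zero] at h0
    linarith
  have hform : ∀ z, f z = α * (exp (-z) + z - 1) := fun z => by
    rw [hf_eq z, hb, hc, sub_eq_zero.mp hd]
    ring
  refine ⟨hform, ?_⟩
  have := (tendsto_exp_neg_atTop_nhds_zero.const_mul α).sub_const α
  rw [mul_zero, zero_sub] at this
  exact this.congr fun z => by rw [hform z]; ring
end

section
/- Let α, v ∈ ℝ and let f : ℝ → ℝ be a C⁴ function satisfying f''''(w) = f''(w) for every w ∈ ℝ, with f(0) = 0 and f'(0) = −v. If there exists M ≥ 0 such that |f(w) − α·w| ≤ M for all w ≥ 0, then f(w) = (α + v)·(exp(−w) + w − 1) − v·w for all w ∈ ℝ, and consequently f(w) − α·w converges to −(α + v) as w → ∞. -/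
/-!
Since `f'''' = f''`, the function `f''` solves `u'' = u`, so it is a combination of `eʷ` and
`e⁻ʷ`; integrating twice, `f = A eʷ + B e⁻ʷ + c w + d`. Boundedness of `f w - α w` on `[0, ∞)`
forces `A = 0` (divide by `eʷ`) and then `c = α` (divide by `w`), and the conditions at `0`
determine `B = α + v` and `d = -(α + v)`.
-/

open Real Filter Topology Asymptotics

theorem exists_eq_add_const_of_hasDerivAt {E : Type*} [NormedAddCommGroup E] [NormedSpace ℝ E]
    {g G g' : ℝ → E} (hg : ∀ x, HasDerivAt g (g' x) x) (hG : ∀ x, HasDerivAt G (g' x) x) :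
    ∃ d, ∀ x, g x = G x + d := by
  refine ⟨g 0 - G 0, fun x => eq_add_of_sub_eq' ?_⟩
  exact is_const_of_deriv_eq_zero (fun y => ((hg y).sub (hG y)).differentiableAt)
    (fun y => by simpa using ((hg y).sub (hG y)).deriv) x 0

theorem eq_mul_exp_of_hasDerivAt {h : ℝ → ℝ} {k : ℝ} (hh : ∀ x, HasDerivAt h (k * h x) x)
    (x : ℝ) : h x = h 0 * exp (k * x) := by
  have hdecay (y : ℝ) : HasDerivAt (fun y => h y * exp (-k * y)) 0 y :=
    ((hh y).mul ((hasDerivAt_id' y).const_mul (-k)).exp).congr_deriv (by ring)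
  have hconst := is_const_of_deriv_eq_zero (fun y => (hdecay y).differentiableAt)
    (fun y => (hdecay y).deriv) x 0
  simp only [mul_zero, exp_zero, mul_one] at hconst
  rw [← hconst, mul_assoc, ← exp_add, neg_mul, neg_add_cancel, exp_zero, mul_one]

theorem exists_eq_exp_add_exp_neg_of_hasDerivAt {u u' : ℝ → ℝ}
    (hu : ∀ x, HasDerivAt u (u' x) x) (hu' : ∀ x, HasDerivAt u' (u x) x) :
    ∃ a b : ℝ, ∀ x, u x = a * exp x + b * exp (-x) := by
  have hsum := eq_mul_exp_of_hasDerivAt (h := u' + u) (k := 1)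
    fun x => by simpa [add_comm] using (hu' x).add (hu x)
  have hdiff := eq_mul_exp_of_hasDerivAt (h := u' - u) (k := -1)
    fun x => by simpa using (hu' x).sub (hu x)
  refine ⟨(u' 0 + u 0) / 2, -(u' 0 - u 0) / 2, fun x => ?_⟩
  have h1 := hsum x
  have h2 := hdiff x
  simp only [Pi.add_apply, Pi.sub_apply, one_mul, neg_one_mul] at h1 h2
  linear_combination (h1 - h2) / 2

theorem ContDiff.hasDerivAt_iteratedDeriv {𝕜 F : Type*} [NontriviallyNormedField 𝕜]
    [NormedAddCommGroup F] [NormedSpace 𝕜 F] {f : 𝕜 → F} {n : ℕ} (hf : ContDiff 𝕜 n f) {k : ℕ}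
    (hk : k < n) (x : 𝕜) : HasDerivAt (iteratedDeriv k f) (iteratedDeriv (k + 1) f x) x := by
  rw [iteratedDeriv_succ]
  exact (hf.differentiable_iteratedDeriv k (by exact_mod_cast hk) x).hasDerivAt

theorem exists_eq_exp_add_exp_neg_add_affine_of_iteratedDeriv_four_eq {f : ℝ → ℝ}
    (hf : ContDiff ℝ 4 f) (hode : ∀ w, iteratedDeriv 4 f w = iteratedDeriv 2 f w) :
    ∃ A B c d : ℝ, (∀ w, f w = A * exp w + B * exp (-w) + c * w + d) ∧
      ∀ w, deriv f w = A * exp w - B * exp (-w) + c := by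
  have hf2 := hf.hasDerivAt_iteratedDeriv (k := 2) (by norm_num)
  have hf3 : ∀ w, HasDerivAt (iteratedDeriv 3 f) (iteratedDeriv 2 f w) w := fun w => by
    simpa [hode w] using hf.hasDerivAt_iteratedDeriv (k := 3) (by norm_num) w
  obtain ⟨A, B, hf2_eq⟩ := exists_eq_exp_add_exp_neg_of_hasDerivAt hf2 hf3
  have hf1 : ∀ w, HasDerivAt (deriv f) (A * exp w + B * exp (-w)) w := fun w => by
    simpa [← hf2_eq w] using hf.hasDerivAt_iteratedDeriv (k := 1) (by norm_num) w
  obtain ⟨c, hf1_eq⟩ := exists_eq_add_const_of_hasDerivAt hf1 fun w =>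
    (((hasDerivAt_exp w).const_mul A).sub ((hasDerivAt_neg w).exp.const_mul B)).congr_deriv
      (by ring)
  have hf0 : ∀ w, HasDerivAt f (A * exp w - B * exp (-w) + c) w := fun w =>
    hf1_eq w ▸ (hf.differentiable (by norm_num) w).hasDerivAt
  obtain ⟨d, hf0_eq⟩ := exists_eq_add_const_of_hasDerivAt hf0 fun w =>
    ((((hasDerivAt_exp w).const_mul A).add ((hasDerivAt_neg w).exp.const_mul B)).add
      ((hasDerivAt_id w).const_mul c)).congr_deriv (by ring)
  exact ⟨A, B, c, d, hf0_eq, hf1_eq⟩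

theorem tendsto_div_nhds_zero_of_isBigO_one {α : Type*} {l : Filter α} {g r : α → ℝ}
    (hg : g =O[l] (fun _ => (1 : ℝ))) (hr : Tendsto r l atTop) :
    Tendsto (fun x => g x / r x) l (𝓝 0) :=
  (hg.trans_isLittleO ((isLittleO_one_left_iff ℝ).2
    (tendsto_norm_atTop_atTop.comp hr))).tendsto_div_nhds_zero

theorem exp_coeff_eq_zero_of_isBigO_one {A B c d : ℝ}
    (h : (fun w => A * exp w + B * exp (-w) + c * w + d) =O[atTop] (fun _ => (1 : ℝ))) :
    A = 0 := by
  have hlim : Tendsto (fun w => A + B * (exp (-w) / exp w) + c * (w / exp w) + d / exp w)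
      atTop (𝓝 A) := by
    have hid : Tendsto (fun w => w / exp w) atTop (𝓝 0) := by
      simpa using (isLittleO_pow_exp_atTop (n := 1)).tendsto_div_nhds_zero
    have hexp : Tendsto (fun w => exp (-w) / exp w) atTop (𝓝 0) :=
      tendsto_exp_neg_atTop_nhds_zero.div_atTop tendsto_exp_atTop
    simpa using ((tendsto_const_nhds.add (hexp.const_mul B)).add (hid.const_mul c)).add
      (tendsto_const_nhds.div_atTop tendsto_exp_atTop)
  have hzero := tendsto_div_nhds_zero_of_isBigO_one h tendsto_exp_atTop
  refine tendsto_nhds_unique (hlim.congr fun w => ?_) (by simpa using hzero)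
  field_simp

theorem slope_eq_zero_of_isBigO_one {B c d : ℝ}
    (h : (fun w => B * exp (-w) + c * w + d) =O[atTop] (fun _ => (1 : ℝ))) :
    c = 0 := by
  have hlim : Tendsto (fun w => B * (exp (-w) / w) + c + d / w) atTop (𝓝 c) := by
    simpa using (((tendsto_exp_neg_atTop_nhds_zero.div_atTop tendsto_id).const_mul B).add
      tendsto_const_nhds).add (tendsto_const_nhds.div_atTop tendsto_id)
  have hzero := tendsto_div_nhds_zero_of_isBigO_one h tendsto_id
  refine tendsto_nhds_unique (hlim.congr' ?_) (by simpa using hzero)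
  filter_upwards [eventually_ne_atTop 0] with w hw
  field_simp

/-- First-order matching at x = 1: a C⁴ solution of f'''' = f'' with f(0) = 0,
    f'(0) = -v such that f(w) - α·w is bounded on [0, ∞) equals
    (α + v)·(e^{-w} + w - 1) - v·w, and f(w) - α·w → -(α + v) as w → ∞. -/
theorem stmt_6 (α v : ℝ) (f : ℝ → ℝ) (hf : ContDiff ℝ 4 f)
    (hode : ∀ w : ℝ, iteratedDeriv 4 f w = iteratedDeriv 2 f w)
    (h0 : f 0 = 0) (h1 : deriv f 0 = -v)
    (hbdd : ∃ M : ℝ, 0 ≤ M ∧ ∀ w : ℝ, 0 ≤ w → |f w - α * w| ≤ M) :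
    (∀ w : ℝ, f w = (α + v) * (Real.exp (-w) + w - 1) - v * w) ∧
      Filter.Tendsto (fun w => f w - α * w) Filter.atTop (nhds (-(α + v))) := by
  obtain ⟨A, B, c, d, hf_eq, hderiv_eq⟩ :=
    exists_eq_exp_add_exp_neg_add_affine_of_iteratedDeriv_four_eq hf hode
  obtain ⟨M, -, hM⟩ := hbdd
  have hbig : (fun w => A * exp w + B * exp (-w) + (c - α) * w + d) =O[atTop]
      (fun _ => (1 : ℝ)) := by
    refine IsBigO.of_bound M ?_
    filter_upwards [eventually_ge_atTop 0] with w hw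
    rw [norm_one, mul_one, Real.norm_eq_abs]
    convert hM w hw using 2
    rw [hf_eq]
    ring
  obtain rfl : A = 0 := exp_coeff_eq_zero_of_isBigO_one hbig
  have hc : c = α := sub_eq_zero.1 (slope_eq_zero_of_isBigO_one (by simpa using hbig))
  have hB : B = α + v := by
    have := hderiv_eq 0
    simp only [neg_zero, exp_zero] at this
    linarith
  have hd : d = -(α + v) := by
    have := hf_eq 0
    simp only [neg_zero, exp_zero] at this
    linarith
  have hsol (w : ℝ) : f w = (α + v) * (exp (-w) + w - 1) - v * w := by
    rw [hf_eq, hB, hc, hd]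
    ring
  refine ⟨hsol, ?_⟩
  have hlim := (tendsto_exp_neg_atTop_nhds_zero.const_mul (α + v)).add_const (-(α + v))
  rw [mul_zero, zero_add] at hlim
  exact hlim.congr fun w => by rw [hsol]; ring
end
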